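/- arXiv:1802.07178 — 2 statements merged into one kernel-verified Lean document; each statement's English description precedes it below -/
import Mathlib

section
/- Let m be a deficient natural number, q a prime, and α ≥ 1 such that q^α exactly divides m (q^α ∣ m and q^{α+1} ∤ m). Then m/q is deficient and its center satisfies c(m/q) = σ(m) / (d(m) + 2m/(σ(q^α) − 1)), an identity of rational numbers. -/
/-- The sum of all divisors of `n`. -/
def sigma1 (n : ℕ) : ℕ := ∑ d ∈ n.divisors, d

/-- The center of a deficient number `m`: `c(m) = σ(m)/d(m)` where `d(m) = 2m - σ(m)`. -/
def center (n : ℕ) : ℚ := (sigma1 n : ℚ) / (2 * (n : ℚ) - (sigma1 n : ℚ))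

lemma sigma1_eq (n : ℕ) : sigma1 n = ArithmeticFunction.sigma 1 n := by
  rw [ArithmeticFunction.sigma_one_apply]; rfl

lemma sigma1_mul {a b : ℕ} (h : a.Coprime b) :
    sigma1 (a * b) = sigma1 a * sigma1 b := by
  simp only [sigma1_eq]
  exact ArithmeticFunction.isMultiplicative_sigma.map_mul_of_coprime h

lemma sigma1_prime_pow {q : ℕ} (hq : q.Prime) (k : ℕ) :
    sigma1 (q ^ k) = ∑ i ∈ Finset.range (k + 1), q ^ i := by
  unfold sigma1
  exact Nat.sum_divisors_prime_pow hq

lemma sigma1_pos {n : ℕ} (hn : 0 < n) : 0 < sigma1 n := by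
  unfold sigma1
  exact Finset.sum_pos (fun d hd => Nat.pos_of_mem_divisors hd)
    ⟨1, Nat.one_mem_divisors.mpr hn.ne'⟩

/-- If `m` is deficient and `q^α` exactly divides `m` (`α ≥ 1`), then `m/q` is
deficient and `c(m/q) = σ(m) / (d(m) + 2m/(σ(q^α) − 1))` as rational numbers. -/
theorem stmt6 (m q α : ℕ) (hm : 1 ≤ m) (hdef : sigma1 m < 2 * m)
    (hq : q.Prime) (hα : 1 ≤ α) (hdvd : q ^ α ∣ m) (hndvd : ¬ q ^ (α + 1) ∣ m) :
    sigma1 (m / q) < 2 * (m / q) ∧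
    center (m / q) = (sigma1 m : ℚ) /
      ((2 * (m : ℚ) - (sigma1 m : ℚ)) + 2 * (m : ℚ) / ((sigma1 (q ^ α) : ℚ) - 1)) := by
  obtain ⟨β, rfl⟩ : ∃ β, α = β + 1 := ⟨α - 1, by omega⟩
  obtain ⟨n, hmn⟩ := hdvd
  have hn0 : 0 < n := by
    rcases Nat.eq_zero_or_pos n with h | h
    · subst h; simp at hmn; omega
    · exact h
  have hqn : ¬ q ∣ n := by
    rintro ⟨c, hc⟩
    exact hndvd ⟨c, by rw [hmn, hc]; ring⟩
  have copqn : q.Coprime n := (Nat.Prime.coprime_iff_not_dvd hq).mpr hqn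
  -- notation
  set T := sigma1 (q ^ β) with hT
  set σn := sigma1 n with hσn
  have hS : sigma1 (q ^ (β + 1)) = q * T + 1 := by
    rw [hT, sigma1_prime_pow hq, sigma1_prime_pow hq, geom_sum_succ]
  have hσm : sigma1 m = (q * T + 1) * σn := by
    rw [hmn, sigma1_mul (copqn.pow_left _), hS]
  have hmn' : m = q * (q ^ β * n) := by rw [hmn]; ring
  have hmq : m / q = q ^ β * n := by rw [hmn', Nat.mul_div_cancel_left _ hq.pos]
  have hσmq : sigma1 (m / q) = T * σn := by rw [hmq, sigma1_mul (copqn.pow_left _)]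
  have hσnpos : 0 < σn := sigma1_pos hn0
  have hTpos : 0 < T := sigma1_pos (pow_pos hq.pos _)
  have hqpos : 0 < q := hq.pos
  -- deficiency of m / q
  have hdef' : sigma1 (m / q) < 2 * (m / q) := by
    rw [hσmq, hmq]
    have h1 : q * (T * σn) < q * (2 * (q ^ β * n)) := by
      have h2 : (q * T + 1) * σn < 2 * (q * (q ^ β * n)) := by rw [← hσm, ← hmn']; exact hdef
      nlinarith
    exact Nat.lt_of_mul_lt_mul_left h1
  refine ⟨hdef', ?_⟩
  -- rational computation
  have hdQ : (0 : ℚ) < 2 * ((q : ℚ) ^ β * n) - (T : ℚ) * σn := by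
    have := hdef'
    rw [hσmq, hmq] at this
    have : ((T * σn : ℕ) : ℚ) < ((2 * (q ^ β * n) : ℕ) : ℚ) := by exact_mod_cast this
    push_cast at this
    linarith
  have hqQ : (1 : ℚ) ≤ (q : ℚ) := by exact_mod_cast hqpos
  have hTQ : (1 : ℚ) ≤ (T : ℚ) := by exact_mod_cast hTpos
  have hσnQ : (1 : ℚ) ≤ (σn : ℚ) := by exact_mod_cast hσnpos
  have hpowQ : (0 : ℚ) < (q : ℚ) ^ β * n := by
    have : (0:ℚ) < (q:ℚ) := by linarith
    positivity
  have hqT : (0 : ℚ) < (q : ℚ) * T := by nlinarith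
  have hbig : (0 : ℚ) < (2 * ((q:ℚ) * ((q:ℚ) ^ β * n)) - ((q:ℚ) * T + 1) * σn)
      + 2 * ((q:ℚ) * ((q:ℚ) ^ β * n)) / ((q:ℚ) * T) := by
    have h2 : (0:ℚ) < 2 * ((q:ℚ) * ((q:ℚ) ^ β * n)) - ((q:ℚ) * T + 1) * σn := by
      have h3 := hdef
      rw [hσm, hmn'] at h3
      have h4 : (((q * T + 1) * σn : ℕ) : ℚ) < ((2 * (q * (q ^ β * n)) : ℕ) : ℚ) := by
        exact_mod_cast h3
      push_cast at h4
      linarith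
    have h5 : (0:ℚ) < 2 * ((q:ℚ) * ((q:ℚ) ^ β * n)) / ((q:ℚ) * T) := by positivity
    linarith
  rw [center, hσmq, hσm, hmq, hmn', hS]
  push_cast
  rw [div_eq_div_iff (by linarith) (by rw [show ((q:ℚ) * T + 1) - 1 = (q:ℚ)*T by ring]; linarith)]
  field_simp
  ring
end

section
/- For every natural number k, the set of primitive abundant numbers n with Ω(n) = k is finite. -/
/-- `n` is abundant if `σ(n) > 2n`. -/
def Abundant (n : ℕ) : Prop := 2 * n < sigma1 n

/-- `n` is deficient if `σ(n) < 2n`. -/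
def Deficient (n : ℕ) : Prop := sigma1 n < 2 * n

/-- A primitive abundant number: abundant and all proper divisors deficient. -/
def PrimitiveAbundant (n : ℕ) : Prop :=
  Abundant n ∧ ∀ d ∈ n.properDivisors, Deficient d

/-- `Ω(n)`: the number of prime factors of `n` counted with multiplicity. -/
def bigOmega (n : ℕ) : ℕ := n.primeFactorsList.length

/-!
Write a primitive abundant `n` as `p * m` with `p` its largest prime factor. Then
`σ(n)/n ≤ (1 + 1/p) σ(m)/m` gives `σ(m)/m > 2 p/(p+1)`, while the proper divisor `m` is
deficient, `σ(m)/m ≤ 2 - 1/m`; together these force `p < 2m`, so `n` is bounded in terms of `m`.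
Now `Ω(m) = Ω(n) - 1`, the proper divisors of `m` are still deficient, and `m` satisfies the
weakened abundance `σ(m)/m > 2 (p/(p+1))^t` with `t = 1` and `p` at least every prime factor of
`m`. Stripping largest primes `r ≤ p` keeps this shape with `t` raised by one, and by Bernoulli,
`(r/(r+1))^(t+1) ≥ 1 - (t+1)/(r+1)`, deficiency of the cofactor `u` bounds `r < 2(t+1)u`.
Induction on `Ω` concludes.
-/

open ArithmeticFunction

lemma bigOmega_eq_cardFactors (n : ℕ) : bigOmega n = cardFactors n :=
  cardFactors_apply.symm

lemma sigma1_prime {p : ℕ} (hp : p.Prime) : sigma1 p = p + 1 := by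
  rw [sigma1, hp.divisors, Finset.sum_pair hp.one_lt.ne, add_comm]

lemma sigma1_mul_le (a b : ℕ) : sigma1 (a * b) ≤ sigma1 a * sigma1 b := by
  rw [sigma1, sigma1, sigma1, Nat.divisors_mul, Finset.sum_mul_sum, ← Finset.sum_product',
    ← Finset.image_mul_product]
  exact Finset.sum_image_le_of_nonneg fun _ _ ↦ Nat.zero_le _

lemma sigma1_prime_mul_le {p : ℕ} (hp : p.Prime) (m : ℕ) :
    sigma1 (p * m) ≤ (p + 1) * sigma1 m :=
  sigma1_prime hp ▸ sigma1_mul_le p m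

lemma succ_pow_succ_le (r t : ℕ) :
    (r + 1) ^ (t + 1) ≤ r ^ (t + 1) + (t + 1) * (r + 1) ^ t := by
  induction t with
  | zero => simp
  | succ t ih =>
    have hpow : r ^ (t + 1) ≤ (r + 1) ^ (t + 1) := Nat.pow_le_pow_left (Nat.le_succ r) _
    calc (r + 1) ^ (t + 2) = (r + 1) ^ (t + 1) * (r + 1) := pow_succ _ _
      _ ≤ (r ^ (t + 1) + (t + 1) * (r + 1) ^ t) * (r + 1) := Nat.mul_le_mul_right _ ih
      _ = r ^ (t + 2) + r ^ (t + 1) + (t + 1) * (r + 1) ^ (t + 1) := by ring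
      _ ≤ r ^ (t + 2) + (t + 2) * (r + 1) ^ (t + 1) := by linarith

lemma exists_eq_largest_prime_mul {m : ℕ} (hm : 2 ≤ m) :
    ∃ r u, r.Prime ∧ m = r * u ∧ ∀ q ∈ m.primeFactors, q ≤ r := by
  obtain ⟨r, hr, hmax⟩ :=
    m.primeFactors.exists_max_image id (Nat.nonempty_primeFactors.mpr hm)
  exact ⟨r, m / r, Nat.prime_of_mem_primeFactors hr,
    (Nat.mul_div_cancel' (Nat.dvd_of_mem_primeFactors hr)).symm, hmax⟩

/-- Clearing denominators in `σ(m)/m · (1 + 1/p)^t > 2`: a necessary condition for `m` times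
`t` primes, all at least `p`, to be abundant. -/
def AbundantAfter (t m : ℕ) : Prop :=
  ∃ p, (∀ q ∈ m.primeFactors, q ≤ p) ∧ 2 * p ^ t * m < (p + 1) ^ t * sigma1 m

lemma Abundant.abundantAfter_zero {m : ℕ} (h : Abundant m) : AbundantAfter 0 m :=
  ⟨m, fun _ ↦ Nat.le_of_mem_primeFactors, by simpa [Abundant] using h⟩

lemma AbundantAfter.ne_zero {t m : ℕ} (h : AbundantAfter t m) : m ≠ 0 := by
  rintro rfl
  obtain ⟨p, -, hp⟩ := h
  simp [sigma1] at hp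

lemma AbundantAfter.lt_of_prime_mul {t r u : ℕ} (hr : r.Prime) (h : AbundantAfter t (r * u)) :
    2 * r ^ (t + 1) * u < (r + 1) ^ (t + 1) * sigma1 u := by
  have hm0 := h.ne_zero
  obtain ⟨p, hp, hlt⟩ := h
  have hrp : r ≤ p := hp r (Nat.mem_primeFactors.mpr ⟨hr, dvd_mul_right r u, hm0⟩)
  -- `r / (r + 1) ≤ p / (p + 1)`
  have hratio : r ^ t * (p + 1) ^ t ≤ p ^ t * (r + 1) ^ t := by
    rw [← mul_pow, ← mul_pow]
    exact Nat.pow_le_pow_left (by nlinarith) t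
  refine Nat.lt_of_mul_lt_mul_left (a := (p + 1) ^ t) ?_
  calc (p + 1) ^ t * (2 * r ^ (t + 1) * u)
      = r ^ t * (p + 1) ^ t * (2 * r * u) := by ring
    _ ≤ p ^ t * (r + 1) ^ t * (2 * r * u) := Nat.mul_le_mul_right _ hratio
    _ = (r + 1) ^ t * (2 * p ^ t * (r * u)) := by ring
    _ < (r + 1) ^ t * ((p + 1) ^ t * sigma1 (r * u)) :=
        Nat.mul_lt_mul_of_pos_left hlt (Nat.pow_pos (Nat.succ_pos r))
    _ ≤ (r + 1) ^ t * ((p + 1) ^ t * ((r + 1) * sigma1 u)) := by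
        gcongr; exact sigma1_prime_mul_le hr u
    _ = (p + 1) ^ t * ((r + 1) ^ (t + 1) * sigma1 u) := by ring

lemma Deficient.add_one_lt_mul_of_lt {u : ℕ} (hu : Deficient u) {r t : ℕ}
    (h : 2 * r ^ (t + 1) * u < (r + 1) ^ (t + 1) * sigma1 u) :
    r + 1 < 2 * (t + 1) * u := by
  by_contra! hle
  refine lt_irrefl ((r + 1) ^ (t + 1) + 2 * r ^ (t + 1) * u) ?_
  calc (r + 1) ^ (t + 1) + 2 * r ^ (t + 1) * u
      < (r + 1) ^ (t + 1) * (sigma1 u + 1) := by linarith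
    _ ≤ (r + 1) ^ (t + 1) * (2 * u) := Nat.mul_le_mul_left _ hu
    _ ≤ (r ^ (t + 1) + (t + 1) * (r + 1) ^ t) * (2 * u) :=
        Nat.mul_le_mul_right _ (succ_pow_succ_le r t)
    _ = 2 * r ^ (t + 1) * u + (r + 1) ^ t * (2 * (t + 1) * u) := by ring
    _ ≤ 2 * r ^ (t + 1) * u + (r + 1) ^ t * (r + 1) := by gcongr
    _ = (r + 1) ^ (t + 1) + 2 * r ^ (t + 1) * u := by ring

def abundantAfterSet (j t : ℕ) : Set ℕ :=
  {m | bigOmega m = j ∧ (∀ d ∈ m.properDivisors, Deficient d) ∧ AbundantAfter t m}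

lemma exists_mem_abundantAfterSet_of_mem_succ {j t m : ℕ} (hm : m ∈ abundantAfterSet (j + 1) t) :
    ∃ u ∈ abundantAfterSet j (t + 1), m ≤ 2 * (t + 1) * u * u := by
  obtain ⟨hΩ, hdef, hab⟩ := hm
  have hm0 := hab.ne_zero
  have hm2 : 2 ≤ m := by
    have : cardFactors m ≠ 0 := by rw [← bigOmega_eq_cardFactors, hΩ]; exact j.succ_ne_zero
    have := mt cardFactors_eq_zero_iff_eq_zero_or_one.mpr this
    omega
  obtain ⟨r, u, hr, rfl, hmax⟩ := exists_eq_largest_prime_mul hm2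
  have hu0 : u ≠ 0 := right_ne_zero_of_mul hm0
  have hum : u < r * u := lt_mul_left (Nat.pos_of_ne_zero hu0) hr.one_lt
  have hudvd : u ∣ r * u := dvd_mul_left u r
  have hlt := hab.lt_of_prime_mul hr
  have hmem : u ∈ abundantAfterSet j (t + 1) := by
    refine ⟨?_, fun d hd ↦ ?_, r, fun q hq ↦ hmax q (Nat.primeFactors_mono hudvd hm0 hq), hlt⟩
    · rw [bigOmega_eq_cardFactors] at hΩ ⊢
      rw [cardFactors_mul hr.ne_zero hu0, cardFactors_apply_prime hr] at hΩ
      omega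
    · obtain ⟨hd, hdu⟩ := Nat.mem_properDivisors.mp hd
      exact hdef d (Nat.mem_properDivisors.mpr ⟨hd.trans hudvd, hdu.trans hum⟩)
  have hru : r + 1 < 2 * (t + 1) * u :=
    (hdef u (Nat.mem_properDivisors.mpr ⟨hudvd, hum⟩)).add_one_lt_mul_of_lt hlt
  exact ⟨u, hmem, Nat.mul_le_mul_right u (by omega)⟩

theorem abundantAfterSet_finite (j t : ℕ) : (abundantAfterSet j t).Finite := by
  induction j generalizing t with
  | zero =>
    refine (Set.finite_Iic 1).subset fun m hm ↦ ?_
    have := cardFactors_eq_zero_iff_eq_zero_or_one.mp (bigOmega_eq_cardFactors m ▸ hm.1)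
    simp only [Set.mem_Iic]
    omega
  | succ j ih =>
    obtain ⟨B, hB⟩ := (ih (t + 1)).bddAbove
    refine (Set.finite_Iic (2 * (t + 1) * B * B)).subset fun m hm ↦ ?_
    obtain ⟨u, hu, hmu⟩ := exists_mem_abundantAfterSet_of_mem_succ hm
    have huB : u ≤ B := hB hu
    exact hmu.trans (by gcongr)

/-- For every `k`, the set of primitive abundant numbers `n` with `Ω(n) = k` is finite. -/
theorem stmt13 (k : ℕ) :
    {n : ℕ | PrimitiveAbundant n ∧ bigOmega n = k}.Finite :=
  (abundantAfterSet_finite k 0).subset fun _ ⟨⟨habund, hdef⟩, hΩ⟩ ↦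
    ⟨hΩ, hdef, habund.abundantAfter_zero⟩
end
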